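/- Let A ∈ ℝ^{N×N} be symmetric with eigenvalues λ1(A) ≥ λ2(A) ≥ … ordered decreasingly and λr(A) > 0, and let Ã = A + W with W symmetric. Let F ∈ ℝ^{N×r} (resp. F̃) have orthonormal columns consisting of eigenvectors of A (resp. Ã) corresponding to its r largest eigenvalues, with Λ and Λ̃ the associated diagonal matrices of these eigenvalues. Let H = FᵀF̃ have SVD AΣ̃Bᵀ and set G = ABᵀ. Define δ = λr(A) − λ_{r+1}(A). If ‖W‖₂ < δ, then ‖ΛG − GΛ̃‖ ≤ ( (2λ1(A) + ‖W‖₂)/(δ − ‖W‖₂) + 1 )·‖WF‖, where ‖·‖ may be taken to be either the Frobenius norm or the spectral norm (the same norm on both sides). -/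

import Mathlib

open Matrix MeasureTheory
open scoped Classical

noncomputable section

/-- Euclidean norm of a finitely-indexed real vector. -/
def vecNorm {n : Type*} [Fintype n] (v : n → ℝ) : ℝ :=
  Real.sqrt (∑ j, (v j) ^ 2)

/-- Spectral norm (ℓ₂ operator norm) of a real matrix. -/
def specNorm {m n : Type*} [Fintype m] [Fintype n] (A : Matrix m n ℝ) : ℝ :=
  sSup {c : ℝ | ∃ x : n → ℝ, vecNorm x ≤ 1 ∧ c = vecNorm (A.mulVec x)}

/-- Frobenius norm of a real matrix. -/
def frobNorm {m n : Type*} [Fintype m] [Fintype n] (A : Matrix m n ℝ) : ℝ :=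
  Real.sqrt (∑ i, ∑ j, (A i j) ^ 2)

/-- Entrywise maximum norm ‖·‖_∞ of a real matrix. -/
def maxNorm {m n : Type*} [Fintype m] [Fintype n] (A : Matrix m n ℝ) : ℝ :=
  ⨆ i, ⨆ j, |A i j|

/-- Two-to-infinity norm ‖·‖_{2,∞}: maximum Euclidean norm of a row. -/
def twoInfNorm {m n : Type*} [Fintype m] [Fintype n] (A : Matrix m n ℝ) : ℝ :=
  ⨆ i, vecNorm (fun j => A i j)

/-!
Write `H = FᵀF̃ = A' Σ̃ B'ᵀ`, so that `G - H = A' (1 - Σ̃) B'ᵀ`. Since `ΛH - HΛ̃ = -(WF)ᵀF̃`,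
`‖ΛG - GΛ̃‖ ≤ (‖Λ‖₂ + ‖Λ̃‖₂) ‖1 - Σ̃‖ + ‖WF‖`, and Weyl's inequality `|λ̃ᵢ - λᵢ| ≤ ‖W‖₂` bounds
`‖Λ‖₂ + ‖Λ̃‖₂` by `2λ₁ + ‖W‖₂`. It remains to show `(δ - ‖W‖₂) ‖1 - Σ̃‖ ≤ ‖WF‖`.

Let `Y = (1 - F̃F̃ᵀ) F`. Then `YᵀY = 1 - HHᵀ`, so the `i`-th column `aᵢ` of `A'` satisfies
`YᵀY aᵢ = (1 - σ̃ᵢ²) aᵢ`, whence `1 - σ̃ᵢ ≤ ‖Y aᵢ‖`. Moreover `(A + W) Y - YΛ = (1 - F̃F̃ᵀ) W F`,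
the quadratic form of `A + W` is at most `λ̃_{r+1} ≤ λ_{r+1} + ‖W‖₂` on the range of `Y`, and
`Λ ≥ λ_r`. Pairing this identity with `Y aᵢ` (the Davis–Kahan argument) gives
`(δ - ‖W‖₂) ‖Y aᵢ‖ ≤ ‖W F aᵢ‖`; summing squares over `i` gives the Frobenius bound, taking the
maximum the spectral one.
-/

section VectorNorm

variable {m n p : Type*} [Fintype n]

lemma vecNorm_eq_norm (v : n → ℝ) : vecNorm v = ‖WithLp.toLp 2 v‖ := by
  simp [vecNorm, EuclideanSpace.norm_eq]

lemma vecNorm_nonneg (v : n → ℝ) : 0 ≤ vecNorm v := Real.sqrt_nonneg _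

lemma vecNorm_sq (v : n → ℝ) : vecNorm v ^ 2 = v ⬝ᵥ v := by
  rw [vecNorm, Real.sq_sqrt (by positivity)]
  simp [dotProduct, sq]

lemma abs_dotProduct_le (v w : n → ℝ) : |v ⬝ᵥ w| ≤ vecNorm v * vecNorm w := by
  simpa [vecNorm_eq_norm, EuclideanSpace.inner_eq_star_dotProduct, dotProduct_comm] using
    abs_real_inner_le_norm (WithLp.toLp 2 v) (WithLp.toLp 2 w)

lemma mulVec_dotProduct [Fintype m] (P : Matrix m n ℝ) (x : n → ℝ) (y : m → ℝ) :
    (P *ᵥ x) ⬝ᵥ y = x ⬝ᵥ (Pᵀ *ᵥ y) := by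
  rw [mulVec_transpose, dotProduct_comm, dotProduct_mulVec, dotProduct_comm]

lemma col_mul_eq_mulVec (A : Matrix m n ℝ) (B : Matrix n p ℝ) (j : p) :
    (A * B).col j = A *ᵥ B.col j := by
  ext i; simp [col_apply, mul_apply, mulVec, dotProduct]

lemma vecNorm_mulVec_of_transpose_mul_self [Fintype m] [DecidableEq n] {P : Matrix m n ℝ}
    (hP : Pᵀ * P = 1) (x : n → ℝ) : vecNorm (P *ᵥ x) = vecNorm x := by
  rw [← sq_eq_sq₀ (vecNorm_nonneg _) (vecNorm_nonneg _), vecNorm_sq, vecNorm_sq,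
    mulVec_dotProduct, mulVec_mulVec, hP, one_mulVec]

lemma vecNorm_mulVec_le_of_transpose_mul_self_eq {P : Matrix n n ℝ} (hP : Pᵀ * P = P)
    (x : n → ℝ) : vecNorm (P *ᵥ x) ≤ vecNorm x := by
  have h : vecNorm (P *ᵥ x) ^ 2 ≤ vecNorm x * vecNorm (P *ᵥ x) := by
    rw [vecNorm_sq, mulVec_dotProduct, mulVec_mulVec, hP]
    exact (le_abs_self _).trans (abs_dotProduct_le _ _)
  nlinarith [vecNorm_nonneg (P *ᵥ x), vecNorm_nonneg x]

end VectorNorm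

section SpectralNorm

open scoped Matrix.Norms.L2Operator

variable {m n p : Type*} [Fintype m] [Fintype n] [Fintype p]

lemma specNorm_eq_l2_opNorm [DecidableEq n] (A : Matrix m n ℝ) : specNorm A = ‖A‖ := by
  rw [l2_opNorm_def, ← ContinuousLinearMap.sSup_unitClosedBall_eq_norm, specNorm]
  congr 1
  ext c
  simp only [Set.mem_ofPred_eq, Set.mem_image, Metric.mem_closedBall, dist_zero_right]
  constructor
  · rintro ⟨x, hx, rfl⟩
    exact ⟨WithLp.toLp 2 x, by rwa [← vecNorm_eq_norm], by simp [vecNorm_eq_norm]⟩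
  · rintro ⟨x, hx, rfl⟩
    exact ⟨x.ofLp, by rwa [vecNorm_eq_norm], by simp [vecNorm_eq_norm, toLpLin_apply]⟩

lemma specNorm_nonneg (A : Matrix m n ℝ) : 0 ≤ specNorm A := by
  rw [specNorm_eq_l2_opNorm]; exact norm_nonneg A

lemma vecNorm_mulVec_le (A : Matrix m n ℝ) (x : n → ℝ) :
    vecNorm (A *ᵥ x) ≤ specNorm A * vecNorm x := by
  simpa [specNorm_eq_l2_opNorm, vecNorm_eq_norm] using l2_opNorm_mulVec A (WithLp.toLp 2 x)

lemma specNorm_mul_le (A : Matrix m n ℝ) (B : Matrix n p ℝ) :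
    specNorm (A * B) ≤ specNorm A * specNorm B := by
  simpa [specNorm_eq_l2_opNorm] using l2_opNorm_mul A B

lemma specNorm_sub_le (A B : Matrix m n ℝ) : specNorm (A - B) ≤ specNorm A + specNorm B := by
  simpa [specNorm_eq_l2_opNorm] using norm_sub_le A B

lemma specNorm_neg (A : Matrix m n ℝ) : specNorm (-A) = specNorm A := by
  simp [specNorm_eq_l2_opNorm]

lemma specNorm_transpose [DecidableEq m] [DecidableEq n] (A : Matrix m n ℝ) :
    specNorm Aᵀ = specNorm A := by
  simpa [specNorm_eq_l2_opNorm] using l2_opNorm_conjTranspose A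

lemma specNorm_le_of_forall {A : Matrix m n ℝ} {c : ℝ} (hc : 0 ≤ c)
    (h : ∀ x, vecNorm (A *ᵥ x) ≤ c * vecNorm x) : specNorm A ≤ c := by
  rw [specNorm_eq_l2_opNorm, l2_opNorm_def]
  exact ContinuousLinearMap.opNorm_le_bound _ hc fun x => by
    simpa [vecNorm_eq_norm, toLpLin_apply] using h x.ofLp

lemma specNorm_diagonal_le [DecidableEq n] {d : n → ℝ} {c : ℝ} (hc : 0 ≤ c)
    (h : ∀ i, |d i| ≤ c) : specNorm (diagonal d) ≤ c := by
  rw [specNorm_eq_l2_opNorm, l2_opNorm_diagonal]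
  exact (pi_norm_le_iff_of_nonneg hc).2 h

lemma specNorm_le_one_of_transpose_mul_self [DecidableEq n] {P : Matrix m n ℝ}
    (hP : Pᵀ * P = 1) : specNorm P ≤ 1 :=
  specNorm_le_of_forall zero_le_one fun x => by
    rw [vecNorm_mulVec_of_transpose_mul_self hP, one_mul]

lemma specNorm_mul_le_of_transpose_mul_self [DecidableEq p] (A : Matrix m n ℝ)
    {P : Matrix n p ℝ} (hP : Pᵀ * P = 1) : specNorm (A * P) ≤ specNorm A :=
  (specNorm_mul_le A P).trans
    (mul_le_of_le_one_right (specNorm_nonneg A) (specNorm_le_one_of_transpose_mul_self hP))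

lemma vecNorm_col_le_specNorm [DecidableEq n] (M : Matrix m n ℝ) (i : n) :
    vecNorm (M.col i) ≤ specNorm M := by
  have h1 : vecNorm (Pi.single i (1 : ℝ)) = 1 := by simp [vecNorm, Pi.single_apply]
  simpa [h1, mulVec_single_one] using vecNorm_mulVec_le M (Pi.single i 1)

lemma mul_specNorm_diagonal_le [DecidableEq n] {M : Matrix m n ℝ} {d : n → ℝ} {c : ℝ}
    (hc : 0 ≤ c) (h : ∀ i, c * |d i| ≤ vecNorm (M.col i)) :
    c * specNorm (diagonal d) ≤ specNorm M := by
  rw [specNorm_eq_l2_opNorm, l2_opNorm_diagonal, ← abs_of_nonneg hc, ← Real.norm_eq_abs,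
    ← norm_smul]
  refine (pi_norm_le_iff_of_nonneg (specNorm_nonneg M)).2 fun i => ?_
  rw [Pi.smul_apply, smul_eq_mul, Real.norm_eq_abs, abs_mul, abs_of_nonneg hc]
  exact (h i).trans (vecNorm_col_le_specNorm M i)

lemma dotProduct_mulVec_le_specNorm_mul (W : Matrix n n ℝ) (x : n → ℝ) :
    x ⬝ᵥ (W *ᵥ x) ≤ specNorm W * (x ⬝ᵥ x) := by
  calc x ⬝ᵥ (W *ᵥ x) ≤ vecNorm x * vecNorm (W *ᵥ x) :=
        (le_abs_self _).trans (abs_dotProduct_le _ _)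
    _ ≤ vecNorm x * (specNorm W * vecNorm x) :=
        mul_le_mul_of_nonneg_left (vecNorm_mulVec_le W x) (vecNorm_nonneg x)
    _ = specNorm W * (x ⬝ᵥ x) := by rw [← vecNorm_sq]; ring

end SpectralNorm

section FrobeniusNorm

attribute [local instance] Matrix.frobeniusNormedAddCommGroup

variable {m n : Type*} [Fintype m] [Fintype n]

lemma frobNorm_eq_frobenius_norm (A : Matrix m n ℝ) : frobNorm A = ‖A‖ := by
  simp [frobNorm, frobenius_norm_def, Real.sqrt_eq_rpow]

lemma frobNorm_sub_le (A B : Matrix m n ℝ) : frobNorm (A - B) ≤ frobNorm A + frobNorm B := by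
  simpa [frobNorm_eq_frobenius_norm] using norm_sub_le A B

lemma frobNorm_neg (A : Matrix m n ℝ) : frobNorm (-A) = frobNorm A := by
  simp [frobNorm_eq_frobenius_norm]

lemma frobNorm_transpose (A : Matrix m n ℝ) : frobNorm Aᵀ = frobNorm A := by
  simp [frobNorm_eq_frobenius_norm]

end FrobeniusNorm

section FrobeniusSpectral

variable {m n p : Type*} [Fintype m] [Fintype n] [Fintype p]

lemma frobNorm_nonneg (A : Matrix m n ℝ) : 0 ≤ frobNorm A := Real.sqrt_nonneg _

lemma frobNorm_sq_eq_sum_vecNorm_sq (A : Matrix m n ℝ) :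
    frobNorm A ^ 2 = ∑ j, vecNorm (A.col j) ^ 2 := by
  rw [frobNorm, Real.sq_sqrt (by positivity), Finset.sum_comm]
  simp [vecNorm, Real.sq_sqrt, Finset.sum_nonneg, sq_nonneg]

lemma frobNorm_mul_le (A : Matrix m n ℝ) (B : Matrix n p ℝ) :
    frobNorm (A * B) ≤ specNorm A * frobNorm B := by
  rw [← sq_le_sq₀ (frobNorm_nonneg _) (mul_nonneg (specNorm_nonneg A) (frobNorm_nonneg B)),
    mul_pow, frobNorm_sq_eq_sum_vecNorm_sq, frobNorm_sq_eq_sum_vecNorm_sq, Finset.mul_sum]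
  gcongr with j
  rw [col_mul_eq_mulVec, ← mul_pow]
  exact pow_le_pow_left₀ (vecNorm_nonneg _) (vecNorm_mulVec_le A _) 2

lemma frobNorm_mul_le' (A : Matrix m n ℝ) (B : Matrix n p ℝ) :
    frobNorm (A * B) ≤ frobNorm A * specNorm B := by
  rw [← frobNorm_transpose, transpose_mul, mul_comm, ← frobNorm_transpose A,
    ← specNorm_transpose B]
  exact frobNorm_mul_le Bᵀ Aᵀ

lemma frobNorm_mul_le_of_transpose_mul_self [DecidableEq p] (A : Matrix m n ℝ)
    {P : Matrix n p ℝ} (hP : Pᵀ * P = 1) : frobNorm (A * P) ≤ frobNorm A :=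
  (frobNorm_mul_le' A P).trans
    (mul_le_of_le_one_right (frobNorm_nonneg A) (specNorm_le_one_of_transpose_mul_self hP))

lemma vecNorm_col_diagonal [DecidableEq n] (d : n → ℝ) (i : n) :
    vecNorm ((diagonal d).col i) = |d i| := by
  simp [vecNorm, col_apply, diagonal_apply, Real.sqrt_sq_eq_abs]

lemma mul_frobNorm_diagonal_le [DecidableEq n] {M : Matrix m n ℝ} {d : n → ℝ} {c : ℝ}
    (hc : 0 ≤ c) (h : ∀ i, c * |d i| ≤ vecNorm (M.col i)) :
    c * frobNorm (diagonal d) ≤ frobNorm M := by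
  rw [← sq_le_sq₀ (mul_nonneg hc (frobNorm_nonneg _)) (frobNorm_nonneg _), mul_pow,
    frobNorm_sq_eq_sum_vecNorm_sq, frobNorm_sq_eq_sum_vecNorm_sq, Finset.mul_sum]
  refine Finset.sum_le_sum fun i _ => ?_
  rw [vecNorm_col_diagonal, ← mul_pow]
  exact pow_le_pow_left₀ (by positivity) (h i) 2

end FrobeniusSpectral

section Rayleigh

variable {ι : Type*} [Fintype ι]

lemma sum_mul_sq_le {d v : ι → ℝ} {c : ℝ} (h : ∀ i, v i ≠ 0 → d i ≤ c) :
    ∑ i, d i * v i ^ 2 ≤ c * (v ⬝ᵥ v) := by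
  rw [dotProduct, Finset.mul_sum]
  refine Finset.sum_le_sum fun i _ => ?_
  by_cases hi : v i = 0
  · simp [hi]
  · nlinarith [h i hi, sq_nonneg (v i)]

lemma le_sum_mul_sq {d v : ι → ℝ} {c : ℝ} (h : ∀ i, v i ≠ 0 → c ≤ d i) :
    c * (v ⬝ᵥ v) ≤ ∑ i, d i * v i ^ 2 := by
  simpa [neg_mul, Finset.sum_neg_distrib] using
    sum_mul_sq_le (d := -d) (v := v) (c := -c) fun i hi => neg_le_neg (h i hi)

variable [DecidableEq ι]

lemma dotProduct_diagonal_mulVec (d v : ι → ℝ) :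
    v ⬝ᵥ (diagonal d *ᵥ v) = ∑ i, d i * v i ^ 2 := by
  simp only [dotProduct, mulVec_diagonal]
  exact Finset.sum_congr rfl fun i _ => by ring

lemma dotProduct_mulVec_eq_sum (Q : Matrix ι ι ℝ) (d x : ι → ℝ) :
    x ⬝ᵥ ((Q * diagonal d * Qᵀ) *ᵥ x) = ∑ i, d i * (Qᵀ *ᵥ x) i ^ 2 := by
  rw [← mulVec_mulVec, ← mulVec_mulVec, dotProduct_comm, mulVec_dotProduct, dotProduct_comm,
    dotProduct_diagonal_mulVec]

lemma transpose_mulVec_dotProduct_self {Q : Matrix ι ι ℝ} (hQ : Q * Qᵀ = 1) (x : ι → ℝ) :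
    (Qᵀ *ᵥ x) ⬝ᵥ (Qᵀ *ᵥ x) = x ⬝ᵥ x := by
  rw [mulVec_dotProduct, transpose_transpose, mulVec_mulVec, hQ, one_mulVec]

variable [LinearOrder ι]

lemma dotProduct_mulVec_le_of_forall_lt {Q : Matrix ι ι ℝ} {d : ι → ℝ} (hQ : Q * Qᵀ = 1)
    (hd : Antitone d) {k : ι} {x : ι → ℝ} (hx : ∀ i < k, (Qᵀ *ᵥ x) i = 0) :
    x ⬝ᵥ ((Q * diagonal d * Qᵀ) *ᵥ x) ≤ d k * (x ⬝ᵥ x) := by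
  rw [dotProduct_mulVec_eq_sum, ← transpose_mulVec_dotProduct_self hQ]
  exact sum_mul_sq_le fun i hi => hd (not_lt.1 fun h => hi (hx i h))

lemma le_dotProduct_mulVec_of_forall_gt {Q : Matrix ι ι ℝ} {d : ι → ℝ} (hQ : Q * Qᵀ = 1)
    (hd : Antitone d) {k : ι} {x : ι → ℝ} (hx : ∀ i, k < i → (Qᵀ *ᵥ x) i = 0) :
    d k * (x ⬝ᵥ x) ≤ x ⬝ᵥ ((Q * diagonal d * Qᵀ) *ᵥ x) := by
  rw [dotProduct_mulVec_eq_sum, ← transpose_mulVec_dotProduct_self hQ]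
  exact le_sum_mul_sq fun i hi => hd (not_lt.1 fun h => hi (hx i h))

end Rayleigh

section Weyl

variable {ι : Type*} [Fintype ι] [DecidableEq ι] [LinearOrder ι]

lemma exists_ne_zero_vanishing_above_mulVec_vanishing_below (M : Matrix ι ι ℝ) (k : ι) :
    ∃ c ≠ 0, (∀ i, k < i → c i = 0) ∧ ∀ i < k, (M *ᵥ c) i = 0 := by
  let M' : Matrix ι ι ℝ := of fun i => if i < k then M i else if k < i then Pi.single i 1 else 0
  obtain ⟨c, hc, hM'c⟩ :=
    (exists_mulVec_eq_zero_iff (M := M')).2 (det_eq_zero_of_row_eq_zero k fun j => by simp [M'])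
  refine ⟨c, hc, fun i hi => ?_, fun i hi => ?_⟩
  · simpa [M', hi, hi.not_gt, mulVec, single_dotProduct] using congrFun hM'c i
  · simpa [M', hi, mulVec] using congrFun hM'c i

theorem eigenvalue_le_add_specNorm {A W Q Q' : Matrix ι ι ℝ} {d d' : ι → ℝ}
    (hQ : Qᵀ * Q = 1) (hQ' : Q'ᵀ * Q' = 1) (hd : Antitone d) (hd' : Antitone d')
    (hA : A = Q * diagonal d * Qᵀ) (hAW : A + W = Q' * diagonal d' * Q'ᵀ) (k : ι) :
    d' k ≤ d k + specNorm W := by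
  -- Courant–Fischer: `x` lies in the span of the first `k + 1` columns of `Q'` and is
  -- orthogonal to the first `k` columns of `Q`.
  obtain ⟨c, hc, hc_gt, hc_lt⟩ :=
    exists_ne_zero_vanishing_above_mulVec_vanishing_below (Qᵀ * Q') k
  set x := Q' *ᵥ c
  have hQ'x : Q'ᵀ *ᵥ x = c := by rw [mulVec_mulVec, hQ', one_mulVec]
  have hx : 0 < x ⬝ᵥ x := by
    rw [← transpose_mulVec_dotProduct_self (mul_eq_one_comm.1 hQ') x, hQ'x]
    simpa using dotProduct_self_star_pos_iff.2 hc
  have hupper : x ⬝ᵥ (A *ᵥ x) ≤ d k * (x ⬝ᵥ x) := by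
    rw [hA]
    refine dotProduct_mulVec_le_of_forall_lt (mul_eq_one_comm.1 hQ) hd fun i hi => ?_
    rw [mulVec_mulVec]; exact hc_lt i hi
  have hlower : d' k * (x ⬝ᵥ x) ≤ x ⬝ᵥ ((A + W) *ᵥ x) := by
    rw [hAW]
    exact le_dotProduct_mulVec_of_forall_gt (mul_eq_one_comm.1 hQ') hd' fun i hi => by
      rw [hQ'x]; exact hc_gt i hi
  rw [add_mulVec, dotProduct_add] at hlower
  nlinarith [dotProduct_mulVec_le_specNorm_mul W x]

theorem abs_sub_le_specNorm {A W Q Q' : Matrix ι ι ℝ} {d d' : ι → ℝ}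
    (hQ : Qᵀ * Q = 1) (hQ' : Q'ᵀ * Q' = 1) (hd : Antitone d) (hd' : Antitone d')
    (hA : A = Q * diagonal d * Qᵀ) (hAW : A + W = Q' * diagonal d' * Q'ᵀ) (k : ι) :
    |d' k - d k| ≤ specNorm W := by
  have h := eigenvalue_le_add_specNorm (W := -W) hQ' hQ hd' hd hAW
    (by rwa [add_neg_cancel_right]) k
  rw [specNorm_neg] at h
  exact abs_sub_le_iff.2 ⟨by linarith [eigenvalue_le_add_specNorm hQ hQ' hd hd' hA hAW k],
    by linarith⟩

end Weyl

section Eigenvectors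

variable {ι κ κ' : Type*} [Fintype ι]

lemma submatrix_transpose_mul_self [DecidableEq ι] [DecidableEq κ] {Q : Matrix ι ι ℝ}
    (hQ : Qᵀ * Q = 1) {e : κ → ι} (he : Function.Injective e) :
    (Q.submatrix id e)ᵀ * Q.submatrix id e = 1 := by
  rw [transpose_submatrix, ← submatrix_mul _ _ _ _ _ Function.bijective_id, hQ,
    submatrix_one e he]

lemma mul_submatrix_eq_submatrix_mul_diagonal [Fintype κ] [DecidableEq ι] [DecidableEq κ]
    {A Q : Matrix ι ι ℝ} {d : ι → ℝ} (hQ : Qᵀ * Q = 1) (hA : A = Q * diagonal d * Qᵀ) (e : κ → ι) :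
    A * Q.submatrix id e = Q.submatrix id e * diagonal fun j => d (e j) := by
  have hAQ : A * Q = Q * diagonal d := by rw [hA, mul_assoc, hQ, mul_one]
  ext i j
  have h := congrFun (congrFun hAQ i) (e j)
  rw [mul_diagonal] at h ⊢
  simpa [mul_apply] using h

lemma one_sub_mul_transpose_transpose_mul_self [Fintype κ] [DecidableEq ι] [DecidableEq κ]
    {F : Matrix ι κ ℝ} (hF : Fᵀ * F = 1) :
    (1 - F * Fᵀ)ᵀ * (1 - F * Fᵀ) = 1 - F * Fᵀ := by
  rw [transpose_sub, transpose_one, transpose_mul, transpose_transpose, sub_mul, mul_sub,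
    mul_sub, one_mul, mul_one, one_mul, Matrix.mul_assoc, ← Matrix.mul_assoc Fᵀ, hF,
    Matrix.one_mul]
  abel

lemma transpose_mul_one_sub_mul_transpose [Fintype κ] [DecidableEq ι] [DecidableEq κ]
    {F : Matrix ι κ ℝ} (hF : Fᵀ * F = 1) :
    Fᵀ * (1 - F * Fᵀ) = 0 := by
  rw [Matrix.mul_sub, Matrix.mul_one, ← Matrix.mul_assoc, hF, Matrix.one_mul, sub_self]

lemma mul_mul_transpose_comm [Fintype κ] [DecidableEq κ] {B : Matrix ι ι ℝ} {F : Matrix ι κ ℝ}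
    {d : κ → ℝ} (hB : Bᵀ = B) (hBF : B * F = F * diagonal d) : B * (F * Fᵀ) = F * Fᵀ * B := by
  have hFB : Fᵀ * B = diagonal d * Fᵀ := by
    rw [← hB, ← transpose_mul, hBF, transpose_mul, diagonal_transpose]
  rw [← Matrix.mul_assoc, hBF, Matrix.mul_assoc, Matrix.mul_assoc, hFB]

lemma complement_transpose_mul_self [Fintype κ'] [DecidableEq ι] [DecidableEq κ]
    [DecidableEq κ'] {F : Matrix ι κ ℝ} {F' : Matrix ι κ' ℝ}
    (hF : Fᵀ * F = 1) (hF' : F'ᵀ * F' = 1) :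
    ((1 - F' * F'ᵀ) * F)ᵀ * ((1 - F' * F'ᵀ) * F) = 1 - (Fᵀ * F') * (Fᵀ * F')ᵀ := by
  rw [transpose_mul, Matrix.mul_assoc, ← Matrix.mul_assoc _ _ F,
    one_sub_mul_transpose_transpose_mul_self hF', Matrix.sub_mul, Matrix.one_mul,
    Matrix.mul_sub, hF]
  simp only [transpose_mul, transpose_transpose, Matrix.mul_assoc]

lemma commutator_complement_mul [Fintype κ] [Fintype κ'] [DecidableEq ι] [DecidableEq κ]
    [DecidableEq κ'] {A B : Matrix ι ι ℝ} {F : Matrix ι κ ℝ} {F' : Matrix ι κ' ℝ}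
    {d : κ → ℝ} {d' : κ' → ℝ} (hB : Bᵀ = B) (hBF' : B * F' = F' * diagonal d')
    (hAF : A * F = F * diagonal d) :
    B * ((1 - F' * F'ᵀ) * F) - (1 - F' * F'ᵀ) * F * diagonal d =
      (1 - F' * F'ᵀ) * ((B - A) * F) := by
  have hBP : B * (1 - F' * F'ᵀ) = (1 - F' * F'ᵀ) * B := by
    rw [mul_sub, sub_mul, mul_one, one_mul, mul_mul_transpose_comm hB hBF']
  rw [← Matrix.mul_assoc, hBP, Matrix.mul_assoc, Matrix.mul_assoc, ← hAF, ← Matrix.mul_sub,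
    ← Matrix.sub_mul]

lemma commutator_transpose_mul_eq [Fintype κ] [Fintype κ'] [DecidableEq κ] [DecidableEq κ']
    {A W : Matrix ι ι ℝ} {F : Matrix ι κ ℝ} {F' : Matrix ι κ' ℝ}
    {d : κ → ℝ} {d' : κ' → ℝ} (hA : Aᵀ = A) (hW : Wᵀ = W) (hAF : A * F = F * diagonal d)
    (hAWF' : (A + W) * F' = F' * diagonal d') :
    diagonal d * (Fᵀ * F') - Fᵀ * F' * diagonal d' = -((W * F)ᵀ * F') := by
  have hFA : diagonal d * Fᵀ = Fᵀ * A := by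
    rw [← diagonal_transpose, ← transpose_mul, ← hAF, transpose_mul, hA]
  rw [← Matrix.mul_assoc, hFA, Matrix.mul_assoc, Matrix.mul_assoc, ← hAWF', transpose_mul, hW,
    Matrix.add_mul, Matrix.mul_add, Matrix.mul_assoc]
  abel

end Eigenvectors

section DavisKahan

variable {m n : Type*} [Fintype m] [Fintype n] [DecidableEq n]

theorem sub_mul_vecNorm_le_of_eigenvector {M : Matrix m m ℝ} {Y : Matrix m n ℝ} {d u : n → ℝ}
    {μ c₁ c₂ : ℝ} (hd : ∀ j, c₁ ≤ d j)
    (hM : (Y *ᵥ u) ⬝ᵥ (M *ᵥ (Y *ᵥ u)) ≤ c₂ * ((Y *ᵥ u) ⬝ᵥ (Y *ᵥ u)))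
    (hμ : 0 ≤ μ) (hu : Yᵀ *ᵥ (Y *ᵥ u) = μ • u) :
    (c₁ - c₂) * vecNorm (Y *ᵥ u) ≤ vecNorm ((M * Y - Y * diagonal d) *ᵥ u) := by
  -- Pair with `v = Y u`: as `Yᵀ v = μ u`, `⟪v, (M Y - Y D) u⟫ = ⟪v, M v⟫ - μ ⟪u, D u⟫`.
  set v := Y *ᵥ u
  have hvv : v ⬝ᵥ v = μ * (u ⬝ᵥ u) := by
    rw [dotProduct_comm, mulVec_dotProduct, hu, dotProduct_smul, smul_eq_mul]
  have hYd : v ⬝ᵥ (Y *ᵥ (diagonal d *ᵥ u)) = μ * ∑ j, d j * u j ^ 2 := by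
    rw [dotProduct_comm, mulVec_dotProduct, dotProduct_comm, hu, smul_dotProduct,
      dotProduct_diagonal_mulVec, smul_eq_mul]
  have hdu : c₁ * (u ⬝ᵥ u) ≤ ∑ j, d j * u j ^ 2 := le_sum_mul_sq fun j _ => hd j
  have key : (c₁ - c₂) * vecNorm v ^ 2 ≤ -(v ⬝ᵥ ((M * Y - Y * diagonal d) *ᵥ u)) := by
    rw [sub_mulVec, ← mulVec_mulVec, ← mulVec_mulVec, dotProduct_sub, hYd, vecNorm_sq]
    change _ ≤ -(v ⬝ᵥ (M *ᵥ v) - _)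
    linarith [mul_le_mul_of_nonneg_left hdu hμ, congrArg (c₁ * ·) hvv]
  have hCS := (neg_le_abs _).trans (abs_dotProduct_le v ((M * Y - Y * diagonal d) *ᵥ u))
  rcases (vecNorm_nonneg v).eq_or_lt with hv | hv
  · rw [← hv, mul_zero]; exact vecNorm_nonneg _
  · nlinarith

lemma one_sub_mul_transpose_mulVec_col {H U V : Matrix n n ℝ} {σ : n → ℝ} (hU : Uᵀ * U = 1)
    (hV : Vᵀ * V = 1) (hH : H = U * diagonal σ * Vᵀ) (i : n) :
    (1 - H * Hᵀ) *ᵥ U.col i = (1 - σ i ^ 2) • U.col i := by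
  have h : (1 - H * Hᵀ) * U = U * diagonal fun j => 1 - σ j ^ 2 := by
    calc (1 - H * Hᵀ) * U = U - U * diagonal σ * (Vᵀ * V) * diagonal σ * (Uᵀ * U) := by
          simp only [hH, transpose_mul, transpose_transpose, diagonal_transpose, Matrix.sub_mul,
            Matrix.one_mul, Matrix.mul_assoc]
      _ = U * (1 - diagonal fun j => σ j * σ j) := by
          rw [hU, hV, Matrix.mul_one, Matrix.mul_one, Matrix.mul_assoc, diagonal_mul_diagonal,
            mul_sub, mul_one]
      _ = U * diagonal fun j => 1 - σ j ^ 2 := by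
          rw [← diagonal_one, diagonal_sub]; simp [sq]
  rw [← col_mul_eq_mulVec, h]
  ext k; simp [mul_diagonal, mul_comm]

theorem sub_mul_abs_one_sub_le_vecNorm_col {M : Matrix m m ℝ} {Y : Matrix m n ℝ}
    {H U V : Matrix n n ℝ} {σ d : n → ℝ} {c₁ c₂ : ℝ} (hY : Yᵀ * Y = 1 - H * Hᵀ)
    (hU : Uᵀ * U = 1) (hV : Vᵀ * V = 1) (hH : H = U * diagonal σ * Vᵀ) (hσ : ∀ i, 0 ≤ σ i)
    (hd : ∀ j, c₁ ≤ d j)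
    (hM : ∀ x, (Y *ᵥ x) ⬝ᵥ (M *ᵥ (Y *ᵥ x)) ≤ c₂ * ((Y *ᵥ x) ⬝ᵥ (Y *ᵥ x))) (hc : c₂ ≤ c₁)
    (i : n) : (c₁ - c₂) * |1 - σ i| ≤ vecNorm (((M * Y - Y * diagonal d) * U).col i) := by
  set u := U.col i
  have heig : Yᵀ *ᵥ (Y *ᵥ u) = (1 - σ i ^ 2) • u := by
    rw [mulVec_mulVec, hY]; exact one_sub_mul_transpose_mulVec_col hU hV hH i
  have huu : u ⬝ᵥ u = 1 := by
    simpa [u, col_apply, mul_apply, dotProduct] using congrFun (congrFun hU i) i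
  have hYu : vecNorm (Y *ᵥ u) ^ 2 = 1 - σ i ^ 2 := by
    rw [vecNorm_sq, mulVec_dotProduct, heig, dotProduct_smul, huu, smul_eq_mul, mul_one]
  have hσ_le : |1 - σ i| ≤ vecNorm (Y *ᵥ u) := by
    rw [abs_of_nonneg (by nlinarith [hσ i])]
    nlinarith [hσ i, vecNorm_nonneg (Y *ᵥ u)]
  rw [col_mul_eq_mulVec]
  calc (c₁ - c₂) * |1 - σ i| ≤ (c₁ - c₂) * vecNorm (Y *ᵥ u) :=
        mul_le_mul_of_nonneg_left hσ_le (sub_nonneg.2 hc)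
    _ ≤ _ := sub_mul_vecNorm_le_of_eigenvector hd (hM u) (hYu ▸ sq_nonneg _) heig

end DavisKahan

theorem mul_abs_one_sub_le_vecNorm_col {N r : ℕ} (hrN : r < N)
    {A W Qt : Matrix (Fin N) (Fin N) ℝ} {lamt : Fin N → ℝ} {F : Matrix (Fin N) (Fin r) ℝ}
    {d : Fin r → ℝ} {U V : Matrix (Fin r) (Fin r) ℝ} {σ : Fin r → ℝ} {g : ℝ}
    (hQt : Qtᵀ * Qt = 1) (hlamt : Antitone lamt) (hAW : A + W = Qt * diagonal lamt * Qtᵀ)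
    (hF : Fᵀ * F = 1) (hAF : A * F = F * diagonal d) (hg : 0 ≤ g)
    (hgap : ∀ j, lamt ⟨r, hrN⟩ + g ≤ d j) (hU : Uᵀ * U = 1) (hV : Vᵀ * V = 1)
    (hσ : ∀ i, 0 ≤ σ i) (hH : Fᵀ * Qt.submatrix id (Fin.castLE hrN.le) = U * diagonal σ * Vᵀ)
    (i : Fin r) : g * |1 - σ i| ≤ vecNorm ((W * F * U).col i) := by
  set Ft := Qt.submatrix id (Fin.castLE hrN.le)
  have hFt : Ftᵀ * Ft = 1 := submatrix_transpose_mul_self hQt (Fin.castLE_injective _)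
  have hsymm : (A + W)ᵀ = A + W := by
    rw [hAW, transpose_mul, transpose_mul, transpose_transpose, diagonal_transpose,
      Matrix.mul_assoc]
  have hcomm : (A + W) * ((1 - Ft * Ftᵀ) * F) - (1 - Ft * Ftᵀ) * F * diagonal d =
      (1 - Ft * Ftᵀ) * (W * F) := by
    rw [commutator_complement_mul hsymm (mul_submatrix_eq_submatrix_mul_diagonal hQt hAW _) hAF,
      add_sub_cancel_left]
  -- The range of `(1 - F̃F̃ᵀ) F` lies in the span of the eigenvectors of `A + W` of index `≥ r`.
  have hM : ∀ x, (((1 - Ft * Ftᵀ) * F) *ᵥ x) ⬝ᵥ ((A + W) *ᵥ (((1 - Ft * Ftᵀ) * F) *ᵥ x)) ≤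
      lamt ⟨r, hrN⟩ * ((((1 - Ft * Ftᵀ) * F) *ᵥ x) ⬝ᵥ (((1 - Ft * Ftᵀ) * F) *ᵥ x)) := by
    intro x
    rw [hAW]
    refine dotProduct_mulVec_le_of_forall_lt (mul_eq_one_comm.1 hQt) hlamt fun j hj => ?_
    have h : Ftᵀ *ᵥ (((1 - Ft * Ftᵀ) * F) *ᵥ x) = 0 := by
      rw [mulVec_mulVec, ← Matrix.mul_assoc, transpose_mul_one_sub_mul_transpose hFt,
        Matrix.zero_mul, zero_mulVec]
    exact congrFun h ⟨j, hj⟩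
  have h := sub_mul_abs_one_sub_le_vecNorm_col (complement_transpose_mul_self hF hFt) hU hV hH
    hσ hgap hM (le_add_of_nonneg_right hg) i
  rw [add_sub_cancel_left, hcomm, Matrix.mul_assoc, col_mul_eq_mulVec (1 - Ft * Ftᵀ)] at h
  exact h.trans (vecNorm_mulVec_le_of_transpose_mul_self_eq
    (one_sub_mul_transpose_transpose_mul_self hFt) _)

lemma specNorm_diagonal_le_of_antitone {N r : ℕ} (hr : 0 < r) (hrN : r < N) {d : Fin N → ℝ}
    (hd : Antitone d) {c : ℝ} (h₀ : d ⟨0, hr.trans hrN⟩ ≤ c)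
    (h₁ : -c ≤ d ⟨r - 1, (Nat.sub_le r 1).trans_lt hrN⟩) :
    specNorm (diagonal fun j : Fin r => d (Fin.castLE hrN.le j)) ≤ c := by
  have hd₀ : ∀ j : Fin r, d (Fin.castLE hrN.le j) ≤ d ⟨0, hr.trans hrN⟩ :=
    fun j => hd (Fin.le_def.2 (Nat.zero_le _))
  have hd₁ : ∀ j : Fin r, d ⟨r - 1, (Nat.sub_le r 1).trans_lt hrN⟩ ≤ d (Fin.castLE hrN.le j) :=
    fun j => hd (Fin.le_def.2 (by simp; omega))
  exact specNorm_diagonal_le (by linarith [hd₀ ⟨0, hr⟩, hd₁ ⟨0, hr⟩])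
    fun j => abs_le.2 ⟨by linarith [hd₁ j], (hd₀ j).trans h₀⟩

theorem commutator_le_of_svd {n : Type*} [Fintype n] [DecidableEq n] (ν : Matrix n n ℝ → ℝ)
    (hν : ∀ X, 0 ≤ ν X) (hsub : ∀ X Y, ν (X - Y) ≤ ν X + ν Y)
    (hmul : ∀ X Y, ν (X * Y) ≤ specNorm X * ν Y) (hmul' : ∀ X Y, ν (X * Y) ≤ ν X * specNorm Y)
    {Λ Λ' U V : Matrix n n ℝ} {σ : n → ℝ} {a w g c : ℝ} (hU : Uᵀ * U = 1) (hV : Vᵀ * V = 1)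
    (hg : 0 < g) (hΛ : specNorm Λ ≤ a) (hΛ' : specNorm Λ' ≤ a + w)
    (hσ : g * ν (diagonal fun i => 1 - σ i) ≤ c)
    (hH : ν (Λ * (U * diagonal σ * Vᵀ) - U * diagonal σ * Vᵀ * Λ') ≤ c) :
    ν (Λ * (U * Vᵀ) - U * Vᵀ * Λ') ≤ ((2 * a + w) / g + 1) * c := by
  set H := U * diagonal σ * Vᵀ
  set D := U * diagonal (fun i => 1 - σ i) * Vᵀ
  have hD : ν D ≤ c / g := by
    have hV' : Vᵀᵀ * Vᵀ = 1 := by rw [transpose_transpose, mul_eq_one_comm.1 hV]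
    calc ν D ≤ specNorm U * ν (diagonal fun i => 1 - σ i) * specNorm Vᵀ :=
          (hmul' _ _).trans (mul_le_mul_of_nonneg_right (hmul _ _) (specNorm_nonneg _))
      _ ≤ ν (diagonal fun i => 1 - σ i) :=
          (mul_le_of_le_one_right (mul_nonneg (specNorm_nonneg U) (hν _))
            (specNorm_le_one_of_transpose_mul_self hV')).trans
          (mul_le_of_le_one_left (hν _) (specNorm_le_one_of_transpose_mul_self hU))
      _ ≤ c / g := by rw [le_div_iff₀ hg, mul_comm]; exact hσ
  have hGH : U * Vᵀ = H + D := by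
    rw [← Matrix.add_mul, ← Matrix.mul_add, diagonal_add]
    simp
  have ha : 0 ≤ a := (specNorm_nonneg Λ).trans hΛ
  have haw : 0 ≤ a + w := (specNorm_nonneg Λ').trans hΛ'
  calc ν (Λ * (U * Vᵀ) - U * Vᵀ * Λ') = ν ((Λ * H - H * Λ') - (D * Λ' - Λ * D)) := by
        rw [hGH]; congr 1; noncomm_ring
    _ ≤ c + (ν D * (a + w) + a * ν D) := by
        refine (hsub _ _).trans (add_le_add hH ((hsub _ _).trans (add_le_add ?_ ?_)))
        · exact (hmul' _ _).trans (mul_le_mul_of_nonneg_left hΛ' (hν _))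
        · exact (hmul _ _).trans (mul_le_mul_of_nonneg_right hΛ (hν _))
    _ ≤ c + (c / g * (a + w) + a * (c / g)) := by gcongr
    _ = ((2 * a + w) / g + 1) * c := by field_simp; ring

/-- Eigenvalue–rotation commutation bound `‖ΛG − GΛ̃‖ ≤ ((2λ₁(A) + ‖W‖₂)/(δ − ‖W‖₂) + 1)·‖WF‖`
in both the Frobenius and the spectral norm (modified Ding–Chen, Lemma 2). -/
theorem stmt10 {N r : ℕ} (hr : 0 < r) (hrN : r < N)
    (Am W : Matrix (Fin N) (Fin N) ℝ) (hAsymm : Am.IsSymm) (hWsymm : W.IsSymm)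
    -- eigendecompositions of A and Ã = A + W with decreasing eigenvalues
    (Q Qt : Matrix (Fin N) (Fin N) ℝ) (lam lamt : Fin N → ℝ)
    (hQ : Qᵀ * Q = 1) (hQt : Qtᵀ * Qt = 1)
    (hlam : ∀ i j : Fin N, i ≤ j → lam j ≤ lam i)
    (hlamt : ∀ i j : Fin N, i ≤ j → lamt j ≤ lamt i)
    (hAeig : Am = Q * Matrix.diagonal lam * Qᵀ)
    (hAteig : Am + W = Qt * Matrix.diagonal lamt * Qtᵀ)
    (hpos : 0 < lam ⟨r - 1, by omega⟩)
    -- F, F̃: orthonormal eigenvectors for the r largest eigenvalues, Λ, Λ̃ the eigenvalues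
    (F Ft : Matrix (Fin N) (Fin r) ℝ)
    (hF : F = Q.submatrix id (Fin.castLE hrN.le))
    (hFt : Ft = Qt.submatrix id (Fin.castLE hrN.le))
    (Lam Lamt : Matrix (Fin r) (Fin r) ℝ)
    (hLam : Lam = Matrix.diagonal fun i => lam (Fin.castLE hrN.le i))
    (hLamt : Lamt = Matrix.diagonal fun i => lamt (Fin.castLE hrN.le i))
    -- SVD of H = FᵀF̃ and the rotation G
    (A' B' : Matrix (Fin r) (Fin r) ℝ) (σtil : Fin r → ℝ)
    (hA' : A'ᵀ * A' = 1) (hB' : B'ᵀ * B' = 1) (hσtil : ∀ i, 0 ≤ σtil i)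
    (hH : Fᵀ * Ft = A' * Matrix.diagonal σtil * B'ᵀ)
    (G : Matrix (Fin r) (Fin r) ℝ) (hG : G = A' * B'ᵀ)
    -- eigengap condition
    (δ : ℝ) (hδ : δ = lam ⟨r - 1, by omega⟩ - lam ⟨r, hrN⟩)
    (hW : specNorm W < δ) :
    frobNorm (Lam * G - G * Lamt) ≤
      ((2 * lam ⟨0, by omega⟩ + specNorm W) / (δ - specNorm W) + 1) * frobNorm (W * F) ∧
    specNorm (Lam * G - G * Lamt) ≤
      ((2 * lam ⟨0, by omega⟩ + specNorm W) / (δ - specNorm W) + 1) * specNorm (W * F) := by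
  subst hF hFt hLam hLamt hG
  set w := specNorm W
  have hweyl := abs_sub_le_specNorm hQ hQt hlam hlamt hAeig hAteig
  have hg : 0 < δ - w := by linarith
  have hlam₀ : lam ⟨r - 1, by omega⟩ ≤ lam ⟨0, by omega⟩ := hlam _ _ (Fin.le_def.2 (Nat.zero_le _))
  have hΛ := specNorm_diagonal_le_of_antitone hr hrN hlam le_rfl (by linarith)
  have hΛ' := specNorm_diagonal_le_of_antitone hr hrN hlamt (c := lam ⟨0, by omega⟩ + w)
    (by linarith [(abs_le.1 (hweyl ⟨0, by omega⟩)).2])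
    (by linarith [(abs_le.1 (hweyl ⟨r - 1, by omega⟩)).1])
  have hAF := mul_submatrix_eq_submatrix_mul_diagonal hQ hAeig (Fin.castLE hrN.le)
  have hgap : ∀ j : Fin r, lamt ⟨r, hrN⟩ + (δ - w) ≤ lam (Fin.castLE hrN.le j) := fun j => by
    have := hlam (Fin.castLE hrN.le j) ⟨r - 1, by omega⟩ (Fin.le_def.2 (by simp; omega))
    linarith [(abs_le.1 (hweyl ⟨r, hrN⟩)).2]
  have hcol := mul_abs_one_sub_le_vecNorm_col hrN hQt hlamt hAteig
    (submatrix_transpose_mul_self hQ (Fin.castLE_injective _)) hAF hg.le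
    hgap hA' hB' hσtil hH
  have hcomm := commutator_transpose_mul_eq hAsymm hWsymm hAF
    (mul_submatrix_eq_submatrix_mul_diagonal hQt hAteig (Fin.castLE hrN.le))
  have hFt := submatrix_transpose_mul_self hQt (Fin.castLE_injective hrN.le)
  refine ⟨commutator_le_of_svd frobNorm frobNorm_nonneg frobNorm_sub_le frobNorm_mul_le
      frobNorm_mul_le' hA' hB' hg hΛ hΛ' ((mul_frobNorm_diagonal_le hg.le hcol).trans
        (frobNorm_mul_le_of_transpose_mul_self _ hA')) ?_,
    commutator_le_of_svd specNorm specNorm_nonneg specNorm_sub_le specNorm_mul_le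
      specNorm_mul_le hA' hB' hg hΛ hΛ' ((mul_specNorm_diagonal_le hg.le hcol).trans
        (specNorm_mul_le_of_transpose_mul_self _ hA')) ?_⟩
  · rw [← hH, hcomm, frobNorm_neg, ← frobNorm_transpose (W * _)]
    exact frobNorm_mul_le_of_transpose_mul_self _ hFt
  · rw [← hH, hcomm, specNorm_neg, ← specNorm_transpose (W * _)]
    exact specNorm_mul_le_of_transpose_mul_self _ hFt
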